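/- If two processes s and t are not probabilistically ready trace equivalent, then there exists a test T containing no probabilistic transitions such that Res(s,T) ≠ Res(t,T). -/

import Mathlib

inductive Proc (A : Type) where
  | nd : List (A × Proc A) → Proc A
  | pr : List (ℝ × Proc A) → Proc A

namespace Proc

variable {A : Type} [DecidableEq A]

/-- The menu of a nondeterministic state: the set of initially enabled actions. -/
def menu : Proc A → Finset A
  | nd l => (l.map Prod.fst).toFinset
  | pr _ => ∅

/-- Deterministic action transition. -/
def step : Proc A → A → Option (Proc A)
  | nd l, a => (l.find? (fun x => x.1 = a)).map Prod.snd
  | pr _, _ => none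

/-- P¹ₛ(M) : the probability that the initial menu observed is M. -/
noncomputable def P1 : Proc A → Finset A → ℝ
  | nd l, M => if (l.map Prod.fst).toFinset = M then 1 else 0
  | pr l, M => (l.attach.map (fun x => x.1.1 * P1 x.1.2 M)).sum
termination_by p _ => sizeOf p
decreasing_by
  obtain ⟨⟨r, p⟩, hmem⟩ := x
  have h := List.sizeOf_lt_of_mem hmem
  simp at h ⊢
  omega

end Proc
/-- Flattening used when a probabilistic transition would lead to a probabilistic state. -/
def flat {A : Type} (w : ℝ) : Proc A → List (ℝ × Proc A)
  | Proc.pr l => l.map (fun x => (w * x.1, x.2))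
  | q => [(w, q)]

namespace Proc

variable {A : Type} [DecidableEq A]

/-- The derived process s_{(M,a)} : the process that `s` becomes, given that the
menu `M` was offered and the action `a ∈ M` was performed. -/
noncomputable def after : Proc A → Finset A → A → Option (Proc A)
  | nd l, M, a => if (l.map Prod.fst).toFinset = M then step (nd l) a else none
  | pr l, M, a =>
      let sel := l.filter (fun x => x.2.menu = M)
      let tot := (sel.map Prod.fst).sum
      let entries := sel.flatMap (fun x =>
        match x.2.step a with
        | none => []
        | some q => flat (x.1 / tot) q)
      if entries.isEmpty then none else some (pr entries)

/-- The conditional ready-trace probability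
`P_sⁿ(M | M₁,a₁,…,a_{n-1})`, where `none` represents undefinedness. -/
noncomputable def Pn : Proc A → List (Finset A × A) → Finset A → Option ℝ
  | s, [], M => some (P1 s M)
  | s, Ma :: rest, M =>
      if 0 < P1 s Ma.1 then (after s Ma.1 Ma.2).bind (fun s' => Pn s' rest M)
      else none

/-- Probabilistic ready trace equivalence `≈_O`. -/
noncomputable def RTEquiv (s t : Proc A) : Prop :=
  ∀ (tr : List (Finset A × A)) (M : Finset A), Pn s tr M = Pn t tr M

/-- Well-formed process graphs: action-deterministic menus, probabilities in (0,1]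
summing to one, and probabilistic transitions leading to nondeterministic states. -/
inductive WF : Proc A → Prop
  | nd (l : List (A × Proc A)) :
      (l.map Prod.fst).Nodup → (∀ x ∈ l, WF x.2) → WF (.nd l)
  | pr (l : List (ℝ × Proc A)) :
      (∀ x ∈ l, 0 < x.1 ∧ x.1 ≤ 1 ∧ ∃ l', x.2 = Proc.nd l') →
      (l.map Prod.fst).sum = 1 →
      (∀ x ∈ l, WF x.2) → WF (.pr l)

end Proc
/-- The field of rational functions whose argument names are the action labels. -/
abbrev RF (A : Type) := FractionRing (MvPolynomial A ℝ)

/-- The rational function consisting of the single variable named by action `a`. -/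
noncomputable def RVar {A : Type} (a : A) : RF A :=
  algebraMap (MvPolynomial A ℝ) (RF A) (MvPolynomial.X a)

namespace Proc

variable {A : Type} [DecidableEq A]

/-- A state can immediately report success. -/
def hasOmega (ω : A) : Proc A → Prop
  | nd l => ω ∈ l.map Prod.fst
  | pr _ => False

/-- `ResRel ω s T r` : the result of testing process `s` with test `T` is the
rational function `r` (ω is the success action of tests). -/
inductive ResRel (ω : A) : Proc A → Proc A → RF A → Prop
  | success (s : Proc A) (l : List (A × Proc A)) (h : ω ∈ l.map Prod.fst) :
      ResRel ω s (.nd l) 1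
  | probL (l : List (ℝ × Proc A)) (T : Proc A) (r : ℝ × Proc A → RF A)
      (hT : ¬ hasOmega ω T)
      (h : ∀ x ∈ l, ResRel ω x.2 T (r x)) :
      ResRel ω (.pr l) T ((l.map (fun x => algebraMap ℝ (RF A) x.1 * r x)).sum)
  | probR (l : List (A × Proc A)) (l' : List (ℝ × Proc A)) (r : ℝ × Proc A → RF A)
      (h : ∀ x ∈ l', ResRel ω (.nd l) x.2 (r x)) :
      ResRel ω (.nd l) (.pr l') ((l'.map (fun x => algebraMap ℝ (RF A) x.1 * r x)).sum)
  | sync (l l' : List (A × Proc A)) (r : A → RF A)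
      (hω : ω ∉ l'.map Prod.fst)
      (h : ∀ a ∈ (l.map Prod.fst).toFinset ∩ (l'.map Prod.fst).toFinset,
        ∀ sa Ta, Proc.step (.nd l) a = some sa → Proc.step (.nd l') a = some Ta →
          ResRel ω sa Ta (r a)) :
      ResRel ω (.nd l) (.nd l')
        (∑ a ∈ (l.map Prod.fst).toFinset ∩ (l'.map Prod.fst).toFinset,
          (RVar a / ∑ b ∈ (l.map Prod.fst).toFinset ∩ (l'.map Prod.fst).toFinset, RVar b) * r a)

/-- Testing equivalence `≈_T` : equal testing results for every test. -/
def TestEquiv (ω : A) (s t : Proc A) : Prop :=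
  ∀ T : Proc A, WF T → ∀ r : RF A, (ResRel ω s T r ↔ ResRel ω t T r)

/-- Processes (as opposed to tests) never perform the success action ω. -/
inductive NoOmega (ω : A) : Proc A → Prop
  | nd (l : List (A × Proc A)) :
      ω ∉ l.map Prod.fst → (∀ x ∈ l, NoOmega ω x.2) → NoOmega ω (.nd l)
  | pr (l : List (ℝ × Proc A)) :
      (∀ x ∈ l, NoOmega ω x.2) → NoOmega ω (.pr l)

/-- Processes with no probabilistic transitions at all. -/
inductive NoProb : Proc A → Prop
  | nd (l : List (A × Proc A)) : (∀ x ∈ l, NoProb x.2) → NoProb (.nd l)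

end Proc


/-!
Suppose every test without probabilistic transitions gives `s` and `t` the same result. Since
`ResRel` is functional, write `res ω s T` for the result, and `X_a` for `RVar a`. For an action
`a ≠ ω`, a test `T` and a set `B ∌ a`, the test `a.T + Σ_{b ∈ B} b.0` (`choiceTest a T B`) has
result `Σ_M X_a / (Σ_{b ∈ M ∩ ({a} ∪ B)} X_b) · c_M`, summed over the menus `M ∋ a`, where
`c_M = P¹(M) · res(s_{(M,a)}, T)` (`weightedRes`). As `B` ranges over the subsets of the actions
that `s` and `t` can offer, these rational functions determine every `c_M`, because the
alternating sums `Σ_{K ⊆ B} (-1)^|K| X_a / (X_a + Σ_{b ∈ K} X_b)` do not vanish: their value at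
`X = 1` is `1 / (|B| + 1)`. Taking for `T` the success test gives
`P¹_s = P¹_t`, and then general `T` shows that `s_{(M,a)}` and `t_{(M,a)}` again pass the same
tests, so induction on the trace gives `Pⁿ_s = Pⁿ_t`.
-/

section Combinatorics

open Finset

theorem List.sum_map_sum {ι α M : Type*} [AddCommMonoid M] (l : List ι) (s : Finset α)
    (f : ι → α → M) :
    (l.map fun i => ∑ a ∈ s, f i a).sum = ∑ a ∈ s, (l.map fun i => f i a).sum := by
  simpa using Multiset.sum_map_sum (m := (l : Multiset ι)) (s := s) (f := f)

theorem Finset.sum_powerset_ite_eq_insert {α M : Type*} [DecidableEq α] [AddCommMonoid M]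
    {a : α} {U N : Finset α} (haU : a ∉ U) (hN : N ⊆ insert a U) (g : Finset α → M) :
    ∑ K ∈ U.powerset, (if N = insert a K then g K else 0) =
      if a ∈ N then g (N.erase a) else 0 := by
  split_ifs with haN
  · rw [sum_eq_single_of_mem (N.erase a), if_pos (insert_erase haN).symm]
    · exact mem_powerset.mpr fun x hx =>
        (mem_insert.mp (hN (mem_of_mem_erase hx))).resolve_left (ne_of_mem_erase hx)
    · intro K hK hne
      rw [if_neg]
      rintro rfl
      exact hne (erase_insert fun h => haU (mem_powerset.mp hK h)).symm
  · exact sum_eq_zero fun K _ =>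
      if_neg fun (h : N = insert a K) => haN (h ▸ mem_insert_self a K)

theorem sum_range_choose_mul_neg_one_pow_div (n : ℕ) :
    ∑ j ∈ range (n + 1), (n.choose j : ℝ) * ((-1) ^ j / (j + 1)) = 1 / (n + 1) := by
  have hshift : ∑ j ∈ range (n + 1), (-1 : ℤ) ^ j * (n + 1).choose (j + 1) = 1 := by
    have h := Int.alternating_sum_range_choose (n := n + 1)
    rw [sum_range_succ', if_neg n.succ_ne_zero] at h
    simp only [pow_succ, mul_neg_one, neg_mul, sum_neg_distrib, pow_zero,
      Nat.choose_zero_right, Nat.cast_one, mul_one] at h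
    linarith
  rw [eq_div_iff (by positivity), sum_mul]
  calc _ = ∑ j ∈ range (n + 1), ((-1 : ℤ) ^ j * (n + 1).choose (j + 1) : ℝ) :=
        sum_congr rfl fun j _ => by
          have h : ((n + 1 : ℕ) * n.choose j : ℝ) = (n + 1).choose (j + 1) * (j + 1 : ℕ) := by
            exact_mod_cast Nat.add_one_mul_choose_eq n j
          push_cast at h ⊢
          rw [mul_div_assoc', div_mul_eq_mul_div, div_eq_iff (by positivity)]
          linear_combination (-1 : ℝ) ^ j * h
    _ = 1 := by exact_mod_cast hshift

theorem sum_div_eq_zero_map {R K F ι : Type*} [CommRing R] [IsDomain R] [Field K]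
    [Algebra R K] [IsFractionRing R K] [Field F] (f : R →+* F) (s : Finset ι) (p q : ι → R)
    (hq : ∀ i ∈ s, f (q i) ≠ 0)
    (h : ∑ i ∈ s, algebraMap R K (p i) / algebraMap R K (q i) = 0) :
    ∑ i ∈ s, f (p i) / f (q i) = 0 := by
  classical
  have hq0 : ∀ i ∈ s, algebraMap R K (q i) ≠ 0 := fun i hi hzero =>
    hq i hi (by rw [(IsFractionRing.injective R K) (hzero.trans (map_zero _).symm), map_zero])
  have hcleared : ∑ i ∈ s, p i * ∏ j ∈ s.erase i, q j = 0 := by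
    apply IsFractionRing.injective R K
    have := congrArg (· * ∏ j ∈ s, algebraMap R K (q j)) h
    simp only [zero_mul, sum_mul] at this
    rw [map_zero, ← this, map_sum]
    refine sum_congr rfl fun i hi => ?_
    rw [← mul_prod_erase s _ hi, map_mul, map_prod]
    field_simp [hq0 i hi]
  have := congrArg f hcleared
  rw [map_sum, map_zero] at this
  rw [← mul_left_injective₀ (prod_ne_zero_iff.mpr hq) |>.eq_iff, zero_mul, sum_mul, ← this]
  refine sum_congr rfl fun i hi => ?_
  rw [← mul_prod_erase s _ hi, map_mul, map_prod]
  field_simp [hq i hi]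

theorem sum_powerset_insert_inter {α R : Type*} [DecidableEq α] [AddCommMonoid R] [Mul R]
    {u : α} {U B : Finset α} (hu : u ∉ U) (hB : B ⊆ U) (φ d : Finset α → R) :
    ∑ M ∈ (insert u U).powerset, φ (M ∩ B) * d M
      = ∑ M ∈ U.powerset, (φ (M ∩ B) * d M + φ (M ∩ B) * d (insert u M)) := by
  rw [sum_powerset_insert hu, ← sum_add_distrib]
  refine sum_congr rfl fun M _ => ?_
  rw [insert_inter_of_notMem fun h => hu (hB h)]

theorem sum_powerset_insert_inter_insert {α R : Type*} [DecidableEq α] [AddCommMonoid R] [Mul R]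
    {u : α} {U B : Finset α} (hu : u ∉ U) (φ d : Finset α → R) :
    ∑ M ∈ (insert u U).powerset, φ (M ∩ insert u B) * d M
      = ∑ M ∈ U.powerset, (φ (M ∩ B) * d M + φ (insert u (M ∩ B)) * d (insert u M)) := by
  rw [sum_powerset_insert hu, ← sum_add_distrib]
  refine sum_congr rfl fun M hM => ?_
  have huM : u ∉ M := fun h => hu (mem_powerset.mp hM h)
  rw [inter_insert_of_notMem huM, insert_inter_distrib]

theorem eq_zero_of_forall_sum_powerset_inter_eq_zero {α R : Type*} [DecidableEq α] [Ring R]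
    [NoZeroDivisors R] (U : Finset α) (φ d : Finset α → R)
    (hφ : ∀ B ⊆ U, ∑ K ∈ B.powerset, (-1) ^ K.card * φ K ≠ 0)
    (h : ∀ B ⊆ U, ∑ M ∈ U.powerset, φ (M ∩ B) * d M = 0) :
    ∀ M ⊆ U, d M = 0 := by
  -- For `u ∉ U`, the equations for `B ⊆ U` give `d M + d (insert u M) = 0`; those for `insert u B`
  -- are then the system for `U` and `K ↦ φ K - φ (insert u K)`, whose alternating sum over `B`
  -- is the alternating sum of `φ` over `insert u B`.
  induction U using Finset.induction_on generalizing φ d with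
  | empty =>
    intro M hM
    rw [subset_empty.mp hM]
    simpa using (mul_eq_zero.mp (by simpa using h ∅ le_rfl)).resolve_left
      (by simpa using hφ ∅ le_rfl)
  | insert u U hu ih =>
    have hpair : ∀ M ⊆ U, d M + d (insert u M) = 0 := by
      refine ih φ _ (fun B hB => hφ B (hB.trans (subset_insert u U))) fun B hB => ?_
      simpa [← sum_powerset_insert_inter hu hB, mul_add] using
        h B (hB.trans (subset_insert u U))
    have hsmall : ∀ M ⊆ U, d M = 0 := by
      refine ih (fun K => φ K - φ (insert u K)) d (fun B hB => ?_) fun B hB => ?_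
      · have hcard : ∀ K ∈ B.powerset, (-1 : R) ^ (insert u K).card = -(-1) ^ K.card :=
          fun K hK => by
            rw [card_insert_of_notMem fun h => hu (hB (mem_powerset.mp hK h)), pow_succ,
              mul_neg_one]
        have := hφ (insert u B) (insert_subset_insert u hB)
        rw [sum_powerset_insert fun h => hu (hB h), ← sum_add_distrib] at this
        convert this using 2 with K hK
        rw [hcard K hK]
        noncomm_ring
      · have := h (insert u B) (insert_subset_insert u hB)
        rw [sum_powerset_insert_inter_insert hu] at this
        rw [← this]
        refine sum_congr rfl fun M hM => ?_
        rw [eq_neg_of_add_eq_zero_right (hpair M (mem_powerset.mp hM))]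
        noncomm_ring
    intro M hM
    by_cases huM : u ∈ M
    · have hM' : M.erase u ⊆ U := fun x hx => by
        have := hM (mem_of_mem_erase hx)
        exact (mem_insert.mp this).resolve_left (ne_of_mem_erase hx)
      have := hpair _ hM'
      rwa [insert_erase huM, hsmall _ hM', zero_add] at this
    · exact hsmall M fun x hx => (mem_insert.mp (hM hx)).resolve_left fun h => huM (h ▸ hx)

theorem sum_powerset_neg_one_pow_mul_RVar_div_ne_zero {A : Type} [DecidableEq A] {a : A}
    {B : Finset A} (ha : a ∉ B) :
    ∑ K ∈ B.powerset, (-1 : RF A) ^ K.card * (RVar a / ∑ b ∈ insert a K, RVar b) ≠ 0 := by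
  intro h
  let one : MvPolynomial A ℝ →+* ℝ := MvPolynomial.eval fun _ => 1
  have hcard : ∀ K ∈ B.powerset, one (∑ b ∈ insert a K, MvPolynomial.X b) = K.card + 1 := by
    intro K hK
    have haK : a ∉ K := fun h => ha (mem_powerset.mp hK h)
    simp [one, card_insert_of_notMem haK]
  have key := sum_div_eq_zero_map (K := RF A) one B.powerset
    (fun K => (-1) ^ K.card * MvPolynomial.X a) (fun K => ∑ b ∈ insert a K, MvPolynomial.X b)
    (fun K hK => by rw [hcard K hK]; positivity)
    (by simpa [RVar, mul_div_assoc] using h)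
  rw [sum_congr rfl fun K hK => by rw [hcard K hK]] at key
  simp only [map_mul, map_pow, map_neg, map_one, one, MvPolynomial.eval_X, mul_one] at key
  rw [sum_powerset_apply_card (fun j => (-1 : ℝ) ^ j / (j + 1))] at key
  simp only [nsmul_eq_mul, sum_range_choose_mul_neg_one_pow_div] at key
  exact absurd key (by positivity)

end Combinatorics

namespace Proc

section

variable {A : Type}

@[elab_as_elim]
theorem induction {motive : Proc A → Prop}
    (nd : ∀ l, (∀ x ∈ l, motive x.2) → motive (.nd l))
    (pr : ∀ l, (∀ x ∈ l, motive x.2) → motive (.pr l)) : ∀ s, motive s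
  | .nd l => nd l fun x _ => induction nd pr x.2
  | .pr l => pr l fun x _ => induction nd pr x.2
termination_by s => sizeOf s
decreasing_by
  all_goals
    have := List.sizeOf_lt_of_mem ‹x ∈ l›
    cases x
    simp at this ⊢
    omega

def branches : Proc A → List (ℝ × Proc A)
  | nd l => [(1, nd l)]
  | pr l => l

theorem WF.of_mem_branches {s : Proc A} (hs : WF s) {x : ℝ × Proc A} (hx : x ∈ s.branches) :
    0 < x.1 ∧ x.1 ≤ 1 ∧ (∃ l, x.2 = Proc.nd l) ∧ WF x.2 := by
  cases hs with
  | nd l _ _ =>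
    obtain rfl : x = (1, Proc.nd l) := List.mem_singleton.mp hx
    exact ⟨one_pos, le_rfl, ⟨l, rfl⟩, by constructor <;> assumption⟩
  | pr l hl _ hwf => exact ⟨(hl x hx).1, (hl x hx).2.1, (hl x hx).2.2, hwf x hx⟩

theorem WF.sum_branches {s : Proc A} (hs : WF s) : (s.branches.map Prod.fst).sum = 1 := by
  cases hs with
  | nd => simp [branches]
  | pr _ _ h _ => exact h

theorem NoOmega.of_mem_branches {ω : A} {s : Proc A} (hs : NoOmega ω s) {x : ℝ × Proc A}
    (hx : x ∈ s.branches) : NoOmega ω x.2 := by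
  cases hs with
  | nd l _ _ =>
    obtain rfl : x = (1, Proc.nd l) := List.mem_singleton.mp hx
    constructor <;> assumption
  | pr l h => exact h x hx

theorem flat_eq_map_branches (w : ℝ) (q : Proc A) :
    flat w q = q.branches.map fun y => (w * y.1, y.2) := by
  cases q <;> simp [flat, branches]

noncomputable def choiceTest (a : A) (T : Proc A) (B : Finset A) : Proc A :=
  nd ((a, T) :: B.toList.map fun b => (b, nd []))

theorem WF.choiceTest {a : A} {T : Proc A} {B : Finset A} (ha : a ∉ B) (hT : WF T) :
    WF (choiceTest a T B) := by
  refine .nd _ ?_ ?_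
  · simpa [List.map_map, Function.comp_def, ha] using B.nodup_toList
  · simp only [List.mem_cons, List.mem_map]
    rintro x (rfl | ⟨b, _, rfl⟩)
    · exact hT
    · exact .nd [] List.nodup_nil (by simp)

theorem NoProb.choiceTest {a : A} {T : Proc A} (B : Finset A) (hT : NoProb T) :
    NoProb (choiceTest a T B) := by
  refine .nd _ ?_
  simp only [List.mem_cons, List.mem_map]
  rintro x (rfl | ⟨b, _, rfl⟩)
  · exact hT
  · exact .nd [] (by simp)

end

variable {A : Type} [DecidableEq A]

def stepD (p : Proc A) (a : A) : Proc A := (p.step a).getD (nd [])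

theorem mem_of_step_eq_some {l : List (A × Proc A)} {a : A} {q : Proc A}
    (h : (nd l).step a = some q) : (a, q) ∈ l := by
  obtain ⟨x, hx, rfl⟩ := Option.map_eq_some_iff.mp h
  have hxa : x.1 = a := by simpa using List.find?_some hx
  simpa [← hxa] using List.mem_of_find?_eq_some hx

theorem step_eq_some_stepD {p : Proc A} {a : A} (h : a ∈ p.menu) :
    p.step a = some (p.stepD a) := by
  cases p with
  | pr => simp [menu] at h
  | nd l =>
    obtain ⟨x, hx, rfl⟩ := List.mem_map.mp (List.mem_toFinset.mp h)
    obtain ⟨y, hy⟩ := Option.isSome_iff_exists.mp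
      (List.find?_isSome.mpr ⟨x, hx, decide_eq_true rfl⟩ : (l.find? fun y => y.1 = x.1).isSome)
    simp [stepD, step, hy]

theorem step_eq_none {p : Proc A} {a : A} (h : a ∉ p.menu) : p.step a = none := by
  cases p with
  | pr => rfl
  | nd l =>
    cases hq : (nd l).step a with
    | none => rfl
    | some q => exact absurd (List.mem_toFinset.mpr (List.mem_map_of_mem (f := Prod.fst)
        (mem_of_step_eq_some hq))) h

theorem stepD_mem {l : List (A × Proc A)} {a : A} (h : a ∈ (nd l).menu) :
    (a, (nd l).stepD a) ∈ l :=
  mem_of_step_eq_some (step_eq_some_stepD h)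

theorem WF.stepD {s : Proc A} (hs : WF s) (a : A) : WF (s.stepD a) := by
  by_cases ha : a ∈ s.menu
  · cases hs with
    | nd l _ h => exact h _ (stepD_mem ha)
    | pr => simp [menu] at ha
  · simpa [Proc.stepD, step_eq_none ha] using WF.nd [] List.nodup_nil (by simp)

theorem NoOmega.stepD {ω : A} {s : Proc A} (hs : NoOmega ω s) (a : A) :
    NoOmega ω (s.stepD a) := by
  by_cases ha : a ∈ s.menu
  · cases hs with
    | nd l _ h => exact h _ (stepD_mem ha)
    | pr => simp [menu] at ha
  · simpa [Proc.stepD, step_eq_none ha] using NoOmega.nd (ω := ω) [] (by simp) (by simp)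

theorem NoOmega.not_mem_menu {ω : A} {s : Proc A} (hs : NoOmega ω s) : ω ∉ s.menu := by
  cases hs with
  | nd l h _ => simpa [menu] using h
  | pr => simp [menu]

theorem hasOmega_iff_mem_menu {ω : A} {T : Proc A} : hasOmega ω T ↔ ω ∈ T.menu := by
  cases T <;> simp [hasOmega, menu]

theorem ResRel.exists_pr (ω : A) (l : List (ℝ × Proc A)) (T : Proc A)
    (h : ∀ x ∈ l, ∃ r, ResRel ω x.2 T r) : ∃ r, ResRel ω (pr l) T r := by
  by_cases hT : hasOmega ω T
  · cases T with
    | nd l' => exact ⟨1, .success _ l' hT⟩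
    | pr => exact hT.elim
  · choose! r hr using h
    exact ⟨_, .probL l T r hT hr⟩

theorem ResRel.exists (ω : A) (s T : Proc A) : ∃ r, ResRel ω s T r := by
  induction T using Proc.induction generalizing s with
  | pr l' ih =>
    induction s using Proc.induction with
    | pr l ihs => exact exists_pr ω l _ ihs
    | nd l _ =>
      choose! r hr using fun x hx => ih x hx (nd l)
      exact ⟨_, .probR l l' r hr⟩
  | nd l' ih =>
    induction s using Proc.induction with
    | pr l ihs => exact exists_pr ω l _ ihs
    | nd l _ =>
      by_cases hω : ω ∈ l'.map Prod.fst
      · exact ⟨1, .success _ l' hω⟩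
      choose! r hr using fun a (ha : a ∈ (nd l).menu ∩ (nd l').menu) =>
        ih _ (stepD_mem (Finset.mem_inter.mp ha).2) ((nd l).stepD a)
      refine ⟨_, .sync l l' r hω fun a ha sa Ta hsa hTa => ?_⟩
      rw [step_eq_some_stepD (Finset.mem_inter.mp ha).1, Option.some_inj] at hsa
      rw [step_eq_some_stepD (Finset.mem_inter.mp ha).2, Option.some_inj] at hTa
      exact hsa ▸ hTa ▸ hr a ha

theorem ResRel.unique {ω : A} {s T : Proc A} {r r' : RF A} (h : ResRel ω s T r)
    (h' : ResRel ω s T r') : r = r' := by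
  induction h generalizing r' with
  | success => cases h' <;> simp_all [hasOmega]
  | probL l T r hT _ ih =>
    cases h' with
    | success _ l' hω => exact absurd hω hT
    | probL _ _ r' _ h' => exact congrArg List.sum (List.map_congr_left fun x hx => by
        rw [ih x hx (h' x hx)])
  | probR l l' r _ ih =>
    cases h' with
    | probR _ _ r' h' => exact congrArg List.sum (List.map_congr_left fun x hx => by
        rw [ih x hx (h' x hx)])
  | sync l l' r hω _ ih =>
    cases h' with
    | success _ _ hω' => exact absurd hω' hω
    | sync _ _ r' _ h' =>
      refine Finset.sum_congr rfl fun a ha => ?_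
      have hs := step_eq_some_stepD (p := nd l) (Finset.mem_inter.mp ha).1
      have hT := step_eq_some_stepD (p := nd l') (Finset.mem_inter.mp ha).2
      rw [ih a ha _ _ hs hT (h' a ha _ _ hs hT)]

noncomputable def res (ω : A) (s T : Proc A) : RF A := (ResRel.exists ω s T).choose

theorem resRel_res (ω : A) (s T : Proc A) : ResRel ω s T (res ω s T) :=
  (ResRel.exists ω s T).choose_spec

theorem ResRel.res_eq {ω : A} {s T : Proc A} {r : RF A} (h : ResRel ω s T r) : res ω s T = r :=
  (resRel_res ω s T).unique h

theorem res_of_hasOmega {ω : A} (s : Proc A) {T : Proc A} (hT : hasOmega ω T) : res ω s T = 1 := by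
  cases T with
  | nd l' => exact (ResRel.success s l' hT).res_eq
  | pr => exact hT.elim

theorem res_pr {ω : A} (l : List (ℝ × Proc A)) {T : Proc A} (hT : ¬ hasOmega ω T) :
    res ω (pr l) T = (l.map fun x => algebraMap ℝ (RF A) x.1 * res ω x.2 T).sum :=
  (ResRel.probL l T _ hT fun x _ => resRel_res ω x.2 T).res_eq

theorem res_nd_nd {ω : A} (l l' : List (A × Proc A)) (hω : ¬ hasOmega ω (nd l')) :
    res ω (nd l) (nd l') = ∑ a ∈ (nd l).menu ∩ (nd l').menu,
      (RVar a / ∑ b ∈ (nd l).menu ∩ (nd l').menu, RVar b) *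
        res ω ((nd l).stepD a) ((nd l').stepD a) := by
  refine (ResRel.sync l l' _ hω fun a ha sa Ta hsa hTa => ?_).res_eq
  rw [step_eq_some_stepD (p := nd l) (Finset.mem_inter.mp ha).1, Option.some_inj] at hsa
  rw [step_eq_some_stepD (p := nd l') (Finset.mem_inter.mp ha).2, Option.some_inj] at hTa
  exact hsa ▸ hTa ▸ resRel_res ω _ _

theorem res_nil (ω : A) (s : Proc A) : res ω s (nd []) = 0 := by
  have hω : ¬ hasOmega ω (nd ([] : List (A × Proc A))) := by simp [hasOmega]
  induction s using Proc.induction with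
  | nd l _ => simp [res_nd_nd l [] hω, menu]
  | pr l ih =>
    rw [res_pr l hω]
    exact List.sum_eq_zero fun r hr => by
      obtain ⟨x, hx, rfl⟩ := List.mem_map.mp hr
      rw [ih x hx, mul_zero]

theorem res_eq_sum_branches (ω : A) {s : Proc A} (hs : WF s) (T : Proc A) :
    res ω s T = (s.branches.map fun x => algebraMap ℝ (RF A) x.1 * res ω x.2 T).sum := by
  by_cases hT : hasOmega ω T
  · have := congrArg (algebraMap ℝ (RF A)) hs.sum_branches
    rw [map_one, map_list_sum, List.map_map, Function.comp_def] at this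
    simpa only [res_of_hasOmega _ hT, mul_one] using this.symm
  cases s with
  | nd l => simp [branches]
  | pr l => exact res_pr l hT

theorem P1_nd (l : List (A × Proc A)) (M : Finset A) :
    P1 (nd l) M = if (nd l).menu = M then 1 else 0 := by
  rw [P1]
  rfl

theorem P1_eq_sum_branches (s : Proc A) (M : Finset A) :
    P1 s M = (s.branches.map fun x => x.1 * P1 x.2 M).sum := by
  cases s with
  | nd l => simp [branches]
  | pr l =>
    rw [P1]
    exact congrArg List.sum (List.attach_map_val (f := fun x : ℝ × Proc A => x.1 * P1 x.2 M))

def branchMenus (s : Proc A) : Finset (Finset A) := (s.branches.map fun x => x.2.menu).toFinset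

theorem menu_mem_branchMenus {s : Proc A} {x : ℝ × Proc A} (hx : x ∈ s.branches) :
    x.2.menu ∈ s.branchMenus :=
  List.mem_toFinset.mpr (List.mem_map_of_mem hx)

theorem P1_of_mem_branches {s : Proc A} (hs : WF s) {x : ℝ × Proc A} (hx : x ∈ s.branches)
    (M : Finset A) : P1 x.2 M = if x.2.menu = M then 1 else 0 := by
  obtain ⟨-, -, ⟨l, hl⟩, -⟩ := hs.of_mem_branches hx
  rw [hl, P1_nd]

theorem P1_eq_zero {s : Proc A} (hs : WF s) {M : Finset A} (hM : M ∉ s.branchMenus) :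
    P1 s M = 0 := by
  rw [P1_eq_sum_branches]
  refine List.sum_eq_zero fun r hr => ?_
  obtain ⟨x, hx, rfl⟩ := List.mem_map.mp hr
  rw [P1_of_mem_branches hs hx,
    if_neg fun (h : x.2.menu = M) => hM (h ▸ menu_mem_branchMenus hx), mul_zero]

theorem sum_P1 {s : Proc A} (hs : WF s) {S : Finset (Finset A)} (hS : s.branchMenus ⊆ S) :
    ∑ M ∈ S, P1 s M = 1 := by
  simp_rw [P1_eq_sum_branches s, ← List.sum_map_sum, ← Finset.mul_sum]
  rw [← hs.sum_branches]
  congr 1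
  refine List.map_congr_left fun x hx => ?_
  simp [P1_of_mem_branches hs hx, hS (menu_mem_branchMenus hx)]

theorem mem_branchMenus_of_P1_pos {s : Proc A} (hs : WF s) {M : Finset A} (hM : 0 < P1 s M) :
    M ∈ s.branchMenus := by
  by_contra h
  exact hM.ne' (P1_eq_zero hs h)

theorem NoOmega.not_mem_of_mem_branchMenus {ω : A} {s : Proc A} (hs : NoOmega ω s)
    {M : Finset A} (hM : M ∈ s.branchMenus) : ω ∉ M := by
  obtain ⟨x, hx, rfl⟩ := List.mem_map.mp (List.mem_toFinset.mp hM)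
  exact (hs.of_mem_branches hx).not_mem_menu

theorem menu_choiceTest (a : A) (T : Proc A) (B : Finset A) :
    (choiceTest a T B).menu = insert a B := by
  ext; simp [choiceTest, menu]

theorem stepD_choiceTest_self (a : A) (T : Proc A) (B : Finset A) :
    (choiceTest a T B).stepD a = T := by
  simp [choiceTest, Proc.stepD, step]

theorem stepD_choiceTest_of_ne {a b : A} (T : Proc A) (B : Finset A) (hb : b ≠ a) :
    (choiceTest a T B).stepD b = nd [] := by
  cases h : (choiceTest a T B).step b with
  | none => simp [Proc.stepD, h]
  | some q =>
    simp only [Proc.stepD, h, Option.getD_some]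
    have := mem_of_step_eq_some h
    simp only [List.mem_cons, Prod.mk.injEq, List.mem_map] at this
    grind

theorem res_nd_choiceTest {ω a : A} (l : List (A × Proc A)) (T : Proc A) {B : Finset A}
    (hω : ω ∉ insert a B) :
    res ω (nd l) (choiceTest a T B) = if a ∈ (nd l).menu then
      RVar a / (∑ b ∈ (nd l).menu ∩ insert a B, RVar b) * res ω ((nd l).stepD a) T else 0 := by
  rw [choiceTest, res_nd_nd _ _ (by rwa [hasOmega_iff_mem_menu, ← choiceTest, menu_choiceTest]),
    ← choiceTest, menu_choiceTest]
  have hzero : ∀ b ≠ a, (RVar b / ∑ c ∈ (nd l).menu ∩ insert a B, RVar c) *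
      res ω ((nd l).stepD b) ((choiceTest a T B).stepD b) = 0 := fun b hb => by
    rw [stepD_choiceTest_of_ne T B hb, res_nil, mul_zero]
  split_ifs with ha
  · rw [Finset.sum_eq_single_of_mem a (by simp [ha]) fun b _ hb => hzero b hb,
      stepD_choiceTest_self]
  · exact Finset.sum_eq_zero fun b hb => hzero b fun h => ha (h ▸ (Finset.mem_inter.mp hb).1)

noncomputable def weightedRes (ω : A) (s : Proc A) (a : A) (T : Proc A) (M : Finset A) : RF A :=
  (s.branches.map fun x => algebraMap ℝ (RF A) (x.1 * P1 x.2 M) * res ω (x.2.stepD a) T).sum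

theorem weightedRes_eq_zero (ω : A) {s : Proc A} (hs : WF s) (a : A) (T : Proc A)
    {M : Finset A} (hM : M ∉ s.branchMenus) : weightedRes ω s a T M = 0 := by
  refine List.sum_eq_zero fun r hr => ?_
  obtain ⟨x, hx, rfl⟩ := List.mem_map.mp hr
  rw [P1_of_mem_branches hs hx, if_neg fun (h : x.2.menu = M) => hM (h ▸ menu_mem_branchMenus hx),
    mul_zero, map_zero, zero_mul]

theorem weightedRes_of_hasOmega {ω : A} (s : Proc A) (a : A) {T : Proc A} (hT : hasOmega ω T)
    (M : Finset A) : weightedRes ω s a T M = algebraMap ℝ (RF A) (P1 s M) := by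
  simp only [weightedRes, res_of_hasOmega _ hT, mul_one, P1_eq_sum_branches s, map_list_sum,
    List.map_map, Function.comp_def]

theorem res_choiceTest {ω a : A} {s : Proc A} (hs : WF s) (T : Proc A) {U B : Finset A}
    (hU : ∀ x ∈ s.branches, x.2.menu ⊆ insert a U) (haU : a ∉ U) (hω : ω ∉ insert a B) :
    res ω s (choiceTest a T B) = ∑ M ∈ U.powerset,
      RVar a / (∑ b ∈ insert a (M ∩ B), RVar b) * weightedRes ω s a T (insert a M) := by
  have hbranch : ∀ x ∈ s.branches, res ω x.2 (choiceTest a T B) = ∑ M ∈ U.powerset,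
      algebraMap ℝ (RF A) (P1 x.2 (insert a M)) *
        (RVar a / (∑ b ∈ insert a (M ∩ B), RVar b) * res ω (x.2.stepD a) T) := by
    intro x hx
    obtain ⟨-, -, ⟨l, hl⟩, -⟩ := hs.of_mem_branches hx
    simp only [hl, res_nd_choiceTest l T hω, P1_nd, apply_ite (algebraMap ℝ (RF A)), map_one,
      map_zero, ite_mul, one_mul, zero_mul]
    rw [Finset.sum_powerset_ite_eq_insert haU (hl ▸ hU x hx)]
    split_ifs with ha
    · rw [Finset.insert_inter_distrib, Finset.insert_erase ha]
    · rfl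
  rw [res_eq_sum_branches ω hs, List.map_congr_left fun x hx => by
    rw [hbranch x hx, Finset.mul_sum]]
  rw [List.sum_map_sum]
  refine Finset.sum_congr rfl fun M _ => ?_
  rw [weightedRes, ← List.sum_map_mul_left]
  congr 1
  refine List.map_congr_left fun x _ => ?_
  rw [map_mul]
  ring

noncomputable def afterBranches (l : List (ℝ × Proc A)) (M : Finset A) (a : A) :
    List (ℝ × Proc A) :=
  (l.filter fun x => x.2.menu = M).flatMap fun x =>
    flat (x.1 / ((l.filter fun x => x.2.menu = M).map Prod.fst).sum) (x.2.stepD a)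

theorem after_pr {l : List (ℝ × Proc A)} {M : Finset A} {a : A} (ha : a ∈ M) :
    after (pr l) M a =
      if (afterBranches l M a).isEmpty then none else some (pr (afterBranches l M a)) := by
  have : afterBranches l M a = (l.filter fun x => x.2.menu = M).flatMap fun x =>
      match x.2.step a with
      | none => []
      | some q => flat (x.1 / ((l.filter fun x => x.2.menu = M).map Prod.fst).sum) q := by
    refine List.flatMap_congr fun x hx => ?_
    have hmenu : x.2.menu = M := by simpa using (List.mem_filter.mp hx).2
    rw [step_eq_some_stepD (hmenu ▸ ha)]
  rw [this]
  rfl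

theorem after_eq_none (s : Proc A) {M : Finset A} {a : A} (ha : a ∉ M) : after s M a = none := by
  cases s with
  | nd l =>
    simp only [after]
    split_ifs with h
    · exact step_eq_none (p := nd l) (by simpa [menu, h] using ha)
    · rfl
  | pr l =>
    have : ((l.filter fun x => x.2.menu = M).flatMap fun x =>
        match x.2.step a with
        | none => []
        | some q => flat (x.1 / ((l.filter fun x => x.2.menu = M).map Prod.fst).sum) q) = [] := by
      refine List.flatMap_eq_nil_iff.mpr fun x hx => ?_
      have hmenu : x.2.menu = M := by simpa using (List.mem_filter.mp hx).2
      rw [step_eq_none (hmenu ▸ ha)]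
    simp only [after, this, List.isEmpty_nil, if_true]

theorem mem_of_after_eq_some {s s' : Proc A} {M : Finset A} {a : A}
    (h : after s M a = some s') : a ∈ M := by
  by_contra ha
  rw [after_eq_none s ha] at h
  cases h

theorem after_nd_eq_some {l : List (A × Proc A)} {s' : Proc A} {M : Finset A} {a : A}
    (h : after (nd l) M a = some s') : (nd l).menu = M ∧ s' = (nd l).stepD a := by
  have ha := mem_of_after_eq_some h
  simp only [after] at h
  split_ifs at h with hM
  · refine ⟨hM, ?_⟩
    rw [step_eq_some_stepD (p := nd l) (by simpa [menu, hM] using ha)] at h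
    exact (Option.some_inj.mp h).symm

theorem after_pr_eq_some {l : List (ℝ × Proc A)} {s' : Proc A} {M : Finset A} {a : A}
    (h : after (pr l) M a = some s') : s' = pr (afterBranches l M a) := by
  rw [after_pr (mem_of_after_eq_some h)] at h
  split_ifs at h
  exact (Option.some_inj.mp h).symm

theorem P1_pr_eq_sum_filter {l : List (ℝ × Proc A)} (hs : WF (pr l)) (M : Finset A) :
    P1 (pr l) M = ((l.filter fun x => x.2.menu = M).map Prod.fst).sum := by
  rw [P1_eq_sum_branches, List.map_congr_left fun x hx => by
    rw [P1_of_mem_branches hs hx, mul_ite, mul_one, mul_zero], List.sum_map_ite]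
  simp [branches]

theorem sum_map_afterBranches {R : Type*} [AddCommMonoid R] (l : List (ℝ × Proc A))
    (M : Finset A) (a : A) (F : ℝ × Proc A → R) :
    ((afterBranches l M a).map F).sum = ((l.filter fun x => x.2.menu = M).map fun x =>
      ((x.2.stepD a).branches.map fun y =>
        F (x.1 / ((l.filter fun x => x.2.menu = M).map Prod.fst).sum * y.1, y.2)).sum).sum := by
  simp [afterBranches, List.flatMap_def, List.sum_flatten, flat_eq_map_branches, Function.comp_def]

theorem mem_afterBranches {l : List (ℝ × Proc A)} {M : Finset A} {a : A} {e : ℝ × Proc A} :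
    e ∈ afterBranches l M a ↔ ∃ x ∈ l.filter (fun x => x.2.menu = M),
      ∃ y ∈ (x.2.stepD a).branches,
        (x.1 / ((l.filter fun x => x.2.menu = M).map Prod.fst).sum * y.1, y.2) = e := by
  simp only [afterBranches, List.mem_flatMap, flat_eq_map_branches, List.mem_map]

theorem sum_afterBranches_fst {l : List (ℝ × Proc A)} (hs : WF (pr l)) {M : Finset A}
    (hM : 0 < P1 (pr l) M) (a : A) : ((afterBranches l M a).map Prod.fst).sum = 1 := by
  rw [sum_map_afterBranches]
  rw [P1_pr_eq_sum_filter hs] at hM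
  set sel := l.filter fun x => x.2.menu = M
  have hchild : ∀ x ∈ sel, WF (x.2.stepD a) := fun x hx =>
    (hs.of_mem_branches (List.mem_of_mem_filter hx)).2.2.2.stepD a
  rw [List.map_congr_left fun x hx => by
    rw [List.sum_map_mul_left, (hchild x hx).sum_branches, mul_one, div_eq_mul_inv],
    List.sum_map_mul_right]
  exact mul_inv_cancel₀ hM.ne'

theorem wf_pr_afterBranches {l : List (ℝ × Proc A)} (hs : WF (pr l)) {M : Finset A}
    (hM : 0 < P1 (pr l) M) (a : A) : WF (pr (afterBranches l M a)) := by
  have hentry : ∀ e ∈ afterBranches l M a,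
      (0 < e.1 ∧ e.1 ≤ 1 ∧ ∃ l', e.2 = nd l') ∧ WF e.2 := by
    intro e he
    obtain ⟨x, hx, y, hy, rfl⟩ := mem_afterBranches.mp he
    have htot := P1_pr_eq_sum_filter hs M ▸ hM
    obtain ⟨hx0, -, -, hxwf⟩ := hs.of_mem_branches (List.mem_of_mem_filter hx)
    obtain ⟨hy0, hy1, hynd, hywf⟩ := (hxwf.stepD a).of_mem_branches hy
    have hxtot : x.1 ≤ ((l.filter fun x => x.2.menu = M).map Prod.fst).sum :=
      List.single_le_sum (fun w hw => by
        obtain ⟨z, hz, rfl⟩ := List.mem_map.mp hw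
        exact (hs.of_mem_branches (List.mem_of_mem_filter hz)).1.le) _ (List.mem_map_of_mem hx)
    have hw1 := (div_le_one htot).mpr hxtot
    refine ⟨⟨by positivity, ?_, hynd⟩, hywf⟩
    calc _ ≤ 1 * 1 := mul_le_mul hw1 hy1 hy0.le zero_le_one
      _ = 1 := one_mul 1
  exact .pr _ (fun e he => (hentry e he).1) (sum_afterBranches_fst hs hM a)
    (fun e he => (hentry e he).2)

theorem noOmega_pr_afterBranches {ω : A} {l : List (ℝ × Proc A)} (hs : NoOmega ω (pr l))
    (M : Finset A) (a : A) : NoOmega ω (pr (afterBranches l M a)) := by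
  refine .pr _ fun e he => ?_
  obtain ⟨x, hx, y, hy, rfl⟩ := mem_afterBranches.mp he
  exact (((hs.of_mem_branches (List.mem_of_mem_filter hx)).stepD a).of_mem_branches hy :)

theorem weightedRes_pr_eq {ω : A} {l : List (ℝ × Proc A)} (hs : WF (pr l)) {M : Finset A}
    (hM : 0 < P1 (pr l) M) (a : A) (T : Proc A) :
    weightedRes ω (pr l) a T M =
      algebraMap ℝ (RF A) (P1 (pr l) M) * res ω (pr (afterBranches l M a)) T := by
  rw [res_eq_sum_branches ω (wf_pr_afterBranches hs hM a), branches, sum_map_afterBranches,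
    weightedRes, P1_pr_eq_sum_filter hs]
  rw [P1_pr_eq_sum_filter hs] at hM
  set sel := l.filter fun x => x.2.menu = M
  set tot := (sel.map Prod.fst).sum
  have hinner : ∀ x ∈ sel, ((x.2.stepD a).branches.map fun y =>
      algebraMap ℝ (RF A) (x.1 / tot * y.1) * res ω y.2 T).sum =
        algebraMap ℝ (RF A) (x.1 / tot) * res ω (x.2.stepD a) T := fun x hx => by
    rw [res_eq_sum_branches ω
      ((hs.of_mem_branches (List.mem_of_mem_filter hx)).2.2.2.stepD a), ← List.sum_map_mul_left]
    simp only [map_mul, mul_assoc]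
  have houter : (l.map fun x => algebraMap ℝ (RF A) (x.1 * P1 x.2 M) * res ω (x.2.stepD a) T) =
      l.map fun x => if x.2.menu = M then
        algebraMap ℝ (RF A) x.1 * res ω (x.2.stepD a) T else 0 :=
    List.map_congr_left fun x hx => by
      rw [P1_of_mem_branches hs hx]
      split_ifs <;> simp
  rw [List.map_congr_left hinner, branches, houter, List.sum_map_ite, ← List.sum_map_mul_left]
  simp only [List.map_const', List.sum_replicate, smul_zero, add_zero]
  refine congrArg List.sum (List.map_congr_left fun x _ => ?_)
  rw [← mul_assoc, ← map_mul, mul_div_cancel₀ _ hM.ne']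

theorem exists_after_eq_some {s : Proc A} (hs : WF s) {M : Finset A} (hM : 0 < P1 s M)
    {a : A} (ha : a ∈ M) : ∃ s', after s M a = some s' := by
  cases s with
  | nd l =>
    have hmenu : (nd l).menu = M := by
      by_contra h
      simp [P1_nd, h] at hM
    refine ⟨(nd l).stepD a, ?_⟩
    simp only [after]
    rw [if_pos (show (l.map Prod.fst).toFinset = M from hmenu), step_eq_some_stepD (hmenu ▸ ha)]
  | pr l =>
    refine ⟨_, (after_pr ha).trans (if_neg ?_)⟩
    intro hnil
    have := sum_afterBranches_fst hs hM a
    rw [List.isEmpty_iff.mp hnil] at this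
    simp at this

theorem WF.of_after_eq_some {s s' : Proc A} (hs : WF s) {M : Finset A} (hM : 0 < P1 s M)
    {a : A} (h : after s M a = some s') : WF s' := by
  cases s with
  | nd l => exact (after_nd_eq_some h).2 ▸ hs.stepD a
  | pr l => exact (after_pr_eq_some h) ▸ wf_pr_afterBranches hs hM a

theorem NoOmega.of_after_eq_some {ω : A} {s s' : Proc A} (hs : NoOmega ω s) {M : Finset A}
    {a : A} (h : after s M a = some s') : NoOmega ω s' := by
  cases s with
  | nd l => exact (after_nd_eq_some h).2 ▸ hs.stepD a
  | pr l => exact (after_pr_eq_some h) ▸ noOmega_pr_afterBranches hs M a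

theorem weightedRes_eq_of_after_eq_some (ω : A) {s s' : Proc A} (hs : WF s) {M : Finset A}
    (hM : 0 < P1 s M) {a : A} (h : after s M a = some s') (T : Proc A) :
    weightedRes ω s a T M = algebraMap ℝ (RF A) (P1 s M) * res ω s' T := by
  cases s with
  | nd l =>
    obtain ⟨hmenu, rfl⟩ := after_nd_eq_some h
    simp [weightedRes, branches, P1_nd, hmenu]
  | pr l => exact (after_pr_eq_some h) ▸ weightedRes_pr_eq hs hM a T

def NoProbTestEquiv (ω : A) (s t : Proc A) : Prop :=
  ∀ T, WF T → NoProb T → res ω s T = res ω t T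

namespace NoProbTestEquiv

variable {ω : A} {s t : Proc A}

theorem weightedRes_eq (h : NoProbTestEquiv ω s t) (hs : WF s) (ht : WF t)
    (hsω : NoOmega ω s) (htω : NoOmega ω t) {a : A} (haω : a ≠ ω) {T : Proc A} (hT : WF T)
    (hTp : NoProb T) {M : Finset A} (haM : a ∈ M) :
    weightedRes ω s a T M = weightedRes ω t a T M := by
  set U := ((s.branchMenus ∪ t.branchMenus).sup id).erase a
  have haU : a ∉ U := Finset.notMem_erase a _
  have hωU : ω ∉ U := fun hω => by
    obtain ⟨N, hN, hωN⟩ := Finset.mem_sup.mp (Finset.mem_of_mem_erase hω)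
    rcases Finset.mem_union.mp hN with hN | hN
    · exact hsω.not_mem_of_mem_branchMenus hN hωN
    · exact htω.not_mem_of_mem_branchMenus hN hωN
  have hsub : ∀ N ∈ s.branchMenus ∪ t.branchMenus, N ⊆ insert a U := fun N hN =>
    (Finset.le_sup (f := id) hN).trans (Finset.insert_erase_subset _ _)
  by_cases hMU : M.erase a ⊆ U
  · suffices hd : ∀ K ⊆ U,
        weightedRes ω s a T (insert a K) - weightedRes ω t a T (insert a K) = 0 by
      simpa [Finset.insert_erase haM, sub_eq_zero] using hd _ hMU
    refine eq_zero_of_forall_sum_powerset_inter_eq_zero U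
      (fun K => RVar a / ∑ b ∈ insert a K, RVar b) _
      (fun B hB => sum_powerset_neg_one_pow_mul_RVar_div_ne_zero fun haB => haU (hB haB))
      fun B hB => ?_
    have haB : a ∉ B := fun haB => haU (hB haB)
    have hωB : ω ∉ insert a B := by
      simpa [not_or, haω.symm] using fun hωB => hωU (hB hωB)
    have := h _ (hT.choiceTest haB) (hTp.choiceTest B)
    rw [res_choiceTest hs T
        (fun x hx => hsub _ (Finset.mem_union_left _ (menu_mem_branchMenus hx))) haU hωB,
      res_choiceTest ht T
        (fun x hx => hsub _ (Finset.mem_union_right _ (menu_mem_branchMenus hx))) haU hωB] at this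
    simp only [mul_sub, Finset.sum_sub_distrib, this, sub_self]
  · have hnot : ∀ {N}, N ∈ s.branchMenus ∪ t.branchMenus → N ≠ M := fun hN hNM =>
      hMU fun b hb => Finset.mem_erase.mpr ⟨Finset.ne_of_mem_erase hb,
        (hNM ▸ Finset.le_sup (f := id) hN) (Finset.mem_of_mem_erase hb)⟩
    rw [weightedRes_eq_zero ω hs a T fun hM => hnot (Finset.mem_union_left _ hM) rfl,
      weightedRes_eq_zero ω ht a T fun hM => hnot (Finset.mem_union_right _ hM) rfl]

theorem P1_eq_of_nonempty (h : NoProbTestEquiv ω s t) (hs : WF s) (ht : WF t)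
    (hsω : NoOmega ω s) (htω : NoOmega ω t) {M : Finset A} (hM : M.Nonempty) :
    P1 s M = P1 t M := by
  obtain ⟨a, haM⟩ := hM
  by_cases hωM : ω ∈ M
  · rw [P1_eq_zero hs fun hM => hsω.not_mem_of_mem_branchMenus hM hωM,
      P1_eq_zero ht fun hM => htω.not_mem_of_mem_branchMenus hM hωM]
  have hsucc : hasOmega ω (nd [(ω, nd [])]) := by simp [hasOmega]
  have hwf : WF (nd [(ω, nd [])]) := .nd _ (by simp) fun x hx => by
    rw [List.mem_singleton.mp hx]
    exact .nd [] (by simp) (by simp)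
  have hnp : NoProb (nd [(ω, nd [])]) := .nd _ fun x hx => by
    rw [List.mem_singleton.mp hx]
    exact .nd [] (by simp)
  have := h.weightedRes_eq hs ht hsω htω (fun h => hωM (h ▸ haM)) hwf hnp haM
  rw [weightedRes_of_hasOmega _ _ hsucc, weightedRes_of_hasOmega _ _ hsucc] at this
  exact (algebraMap ℝ (RF A)).injective this

theorem P1_eq (h : NoProbTestEquiv ω s t) (hs : WF s) (ht : WF t) (hsω : NoOmega ω s)
    (htω : NoOmega ω t) (M : Finset A) : P1 s M = P1 t M := by
  rcases M.eq_empty_or_nonempty with rfl | hM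
  · set S := insert ∅ (s.branchMenus ∪ t.branchMenus)
    have hsum := (sum_P1 hs (S := S) fun N hN => by simp [S, hN]).trans
      (sum_P1 ht (S := S) fun N hN => by simp [S, hN]).symm
    rw [← Finset.add_sum_erase _ _ (Finset.mem_insert_self _ _),
      ← Finset.add_sum_erase _ _ (Finset.mem_insert_self _ _),
      Finset.sum_congr rfl fun N hN => h.P1_eq_of_nonempty hs ht hsω htω
        (Finset.nonempty_iff_ne_empty.mpr (Finset.ne_of_mem_erase hN))] at hsum
    exact add_right_cancel hsum
  · exact h.P1_eq_of_nonempty hs ht hsω htω hM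

theorem of_after_eq_some (h : NoProbTestEquiv ω s t) (hs : WF s) (ht : WF t) (hsω : NoOmega ω s)
    (htω : NoOmega ω t) {M : Finset A} (hM : 0 < P1 s M) {a : A} {s' t' : Proc A}
    (hs' : after s M a = some s') (ht' : after t M a = some t') : NoProbTestEquiv ω s' t' := by
  intro T hT hTp
  have hP1 := h.P1_eq hs ht hsω htω M
  have haM := mem_of_after_eq_some hs'
  have haω : a ≠ ω := fun hω =>
    hsω.not_mem_of_mem_branchMenus (mem_branchMenus_of_P1_pos hs hM) (hω ▸ haM)
  have := h.weightedRes_eq hs ht hsω htω haω hT hTp haM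
  rw [weightedRes_eq_of_after_eq_some ω hs hM hs' T,
    weightedRes_eq_of_after_eq_some ω ht (hP1 ▸ hM) ht' T, hP1] at this
  exact mul_left_cancel₀ (by simpa [hP1] using hM.ne') this

theorem Pn_eq (h : NoProbTestEquiv ω s t) (hs : WF s) (ht : WF t) (hsω : NoOmega ω s)
    (htω : NoOmega ω t) (tr : List (Finset A × A)) (M : Finset A) : Pn s tr M = Pn t tr M := by
  induction tr generalizing s t with
  | nil => simp [Pn, h.P1_eq hs ht hsω htω M]
  | cons Ma tr ih =>
    obtain ⟨M₁, a⟩ := Ma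
    have hP1 := h.P1_eq hs ht hsω htω M₁
    simp only [Pn, hP1]
    split_ifs with hpos
    swap
    · rfl
    by_cases ha : a ∈ M₁
    · obtain ⟨s', hs'⟩ := exists_after_eq_some hs (hP1 ▸ hpos) ha
      obtain ⟨t', ht'⟩ := exists_after_eq_some ht hpos ha
      rw [hs', ht', Option.bind_some, Option.bind_some]
      exact ih (h.of_after_eq_some hs ht hsω htω (hP1 ▸ hpos) hs' ht')
        (hs.of_after_eq_some (hP1 ▸ hpos) hs') (ht.of_after_eq_some hpos ht')
        (hsω.of_after_eq_some hs') (htω.of_after_eq_some ht')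
    · rw [after_eq_none s ha, after_eq_none t ha]

end NoProbTestEquiv

end Proc

/-- If two processes are not probabilistically ready trace equivalent, then
there exists a test with no probabilistic transitions whose testing results on
the two processes differ. -/
theorem not_rtEquiv_implies_nonprob_distinguishing_test
    {A : Type} [DecidableEq A] (ω : A)
    (s t : Proc A) (hs : Proc.WF s) (ht : Proc.WF t)
    (hsω : Proc.NoOmega ω s) (htω : Proc.NoOmega ω t)
    (h : ¬ Proc.RTEquiv s t) :
    ∃ T : Proc A, Proc.WF T ∧ Proc.NoProb T ∧
      ∃ r r' : RF A, Proc.ResRel ω s T r ∧ Proc.ResRel ω t T r' ∧ r ≠ r' := by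
  by_contra! hall
  have hequiv : Proc.NoProbTestEquiv ω s t := fun T hT hTp =>
    hall T hT hTp _ _ (Proc.resRel_res ω s T) (Proc.resRel_res ω t T)
  exact h fun tr M => hequiv.Pn_eq hs ht hsω htω tr M
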